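/- With R(z) as above, the inverse power series R^{−1}(z) is given by the matrix [[B0^even(cz), B1^odd(cz)],[B0^odd(cz), B1^even(cz)]]. -/

import Mathlib

open PowerSeries Matrix

/-- The coefficient of `T^m` in the Faber–Zagier series `B0`. -/
noncomputable def b0coeff (m : ℕ) : ℚ :=
  (-1) ^ m * (Nat.factorial (6 * m) : ℚ) /
    ((Nat.factorial (2 * m) : ℚ) * (Nat.factorial (3 * m) : ℚ))

/-- The coefficient of `T^m` in the Faber–Zagier series `B1`. -/
noncomputable def b1coeff (m : ℕ) : ℚ :=
  (-1) ^ m * ((1 + 6 * (m : ℚ)) / (1 - 6 * (m : ℚ))) * (Nat.factorial (6 * m) : ℚ) /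
    ((Nat.factorial (2 * m) : ℚ) * (Nat.factorial (3 * m) : ℚ))

/-- `B0^even(c z)` as a power series in `z`. -/
noncomputable def B0evenC (c : ℚ) : PowerSeries ℚ :=
  PowerSeries.mk fun m => if Even m then b0coeff m * c ^ m else 0

/-- `B0^odd(c z)`. -/
noncomputable def B0oddC (c : ℚ) : PowerSeries ℚ :=
  PowerSeries.mk fun m => if ¬ Even m then b0coeff m * c ^ m else 0

/-- `B1^even(c z)`. -/
noncomputable def B1evenC (c : ℚ) : PowerSeries ℚ :=
  PowerSeries.mk fun m => if Even m then b1coeff m * c ^ m else 0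

/-- `B1^odd(c z)`. -/
noncomputable def B1oddC (c : ℚ) : PowerSeries ℚ :=
  PowerSeries.mk fun m => if ¬ Even m then b1coeff m * c ^ m else 0

/-- The `R`-matrix `R(z)`, as a `2×2` matrix of power series in `z`. -/
noncomputable def Rmat (c : ℚ) : Matrix (Fin 2) (Fin 2) (PowerSeries ℚ) :=
  !![B1evenC c, -B1oddC c; -B0oddC c, B0evenC c]

/-- `R(-z)`: even parts are unchanged, odd parts change sign. -/
noncomputable def RmatNeg (c : ℚ) : Matrix (Fin 2) (Fin 2) (PowerSeries ℚ) :=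
  !![B1evenC c, B1oddC c; B0oddC c, B0evenC c]


/-- The claimed inverse matrix `R^{-1}(z)`. -/
noncomputable def RmatInv (c : ℚ) : Matrix (Fin 2) (Fin 2) (PowerSeries ℚ) :=
  !![B0evenC c, B1oddC c; B0oddC c, B1evenC c]

/-!
`R(z)` is the adjugate of the proposed inverse, so both products equal its determinant
`B0^even B1^even - B0^odd B1^odd`, the even part of `B0(cz) B1(-cz)`. That this is `1` is the
Faber–Zagier identity: its coefficient of `z^n` (`n` even) is `c^n S_n` with
`S_n = ∑_k (-1)^k b0_{n-k} b1_k`, and creative telescoping gives the recurrence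
`(n+1)(n+2) S_{n+2} = 20736 n (n+2) (3n+2) (3n+4) S_n`, whose factor `n` kills `S_2` and hence
every `S_{2m+2}`, while `S_0 = 1`.
-/

open Finset

theorem ite_even_mul_ite_even_sub_ite_odd_mul_ite_odd {R : Type*} [CommRing R] (x y : R)
    (i j : ℕ) :
    (if Even i then x else 0) * (if Even j then y else 0)
        - (if ¬Even i then x else 0) * (if ¬Even j then y else 0)
      = if Even (i + j) then (-1) ^ j * x * y else 0 := by
  by_cases hi : Even i <;> by_cases hj : Even j <;>
    simp [hi, hj, Nat.even_add, neg_one_pow_eq_ite]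

theorem coeff_evenPart_mul_sub_oddPart_mul {R : Type*} [CommRing R] (a b : ℕ → R) (n : ℕ) :
    coeff n (mk (fun m => if Even m then a m else 0) * mk (fun m => if Even m then b m else 0)
        - mk (fun m => if ¬Even m then a m else 0) * mk (fun m => if ¬Even m then b m else 0))
      = if Even n then ∑ p ∈ antidiagonal n, (-1) ^ p.2 * a p.1 * b p.2 else 0 := by
  simp only [map_sub, coeff_mul, coeff_mk, ← sum_sub_distrib,
    ite_even_mul_ite_even_sub_ite_odd_mul_ite_odd]
  split_ifs with hn
  · exact sum_congr rfl fun p hp => by rw [mem_antidiagonal.1 hp, if_pos hn]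
  · exact sum_eq_zero fun p hp => by rw [mem_antidiagonal.1 hp, if_neg hn]

theorem b0coeff_zero : b0coeff 0 = 1 := by simp [b0coeff]

theorem b1coeff_zero : b1coeff 0 = 1 := by simp [b1coeff]

theorem b0coeff_succ (m : ℕ) :
    b0coeff (m + 1) = -(12 * (6 * m + 1) * (6 * m + 5) / (m + 1)) * b0coeff m := by
  rw [b0coeff, b0coeff, show 6 * (m + 1) = 6 * m + 5 + 1 by ring,
    show 2 * (m + 1) = 2 * m + 1 + 1 by ring, show 3 * (m + 1) = 3 * m + 2 + 1 by ring]
  simp only [Nat.factorial_succ, Nat.cast_mul, Nat.cast_add, Nat.cast_ofNat, Nat.cast_one,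
    pow_succ]
  field_simp
  ring

theorem one_sub_six_mul_natCast_ne_zero (k : ℕ) : (1 : ℚ) - 6 * k ≠ 0 := by
  rw [sub_ne_zero]
  exact_mod_cast (by omega : 1 ≠ 6 * k)

theorem b1coeff_succ (m : ℕ) :
    b1coeff (m + 1) = 12 * (6 * m + 7) * (1 - 6 * m) / (m + 1) * b1coeff m := by
  have h0 := one_sub_six_mul_natCast_ne_zero m
  have h1 := one_sub_six_mul_natCast_ne_zero (m + 1)
  rw [b1coeff, b1coeff, show 6 * (m + 1) = 6 * m + 5 + 1 by ring,
    show 2 * (m + 1) = 2 * m + 1 + 1 by ring, show 3 * (m + 1) = 3 * m + 2 + 1 by ring]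
  simp only [Nat.factorial_succ, Nat.cast_mul, Nat.cast_add, Nat.cast_ofNat, Nat.cast_one,
    pow_succ] at h1 ⊢
  field_simp
  ring

noncomputable def fzTerm (n k : ℕ) : ℚ := (-1) ^ k * b0coeff (n - k) * b1coeff k

-- Zeilberger's certificate: `fzTerm_telescope` is the WZ-pair relation for `fzTerm`.
noncomputable def fzCert (n k : ℕ) : ℚ :=
  (-1) ^ k * k * b1coeff k * b0coeff (n + 2 - k) *
      (2592 * (n + 1) * k ^ 2 - (7776 * n ^ 2 + 20736 * n + 12096) * k
        + (5184 * n ^ 3 + 23328 * n ^ 2 + 32472 * n + 13464)) /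
    (72 * (6 * n - 6 * k + 7) * (6 * n - 6 * k + 11))

theorem fzCert_zero (n : ℕ) : fzCert n 0 = 0 := by simp [fzCert]

theorem fzTerm_telescope {n k : ℕ} (hk : k ≤ n) :
    ((n + 1) * (n + 2) : ℚ) * fzTerm (n + 2) k
        - 20736 * n * (n + 2) * (3 * n + 2) * (3 * n + 4) * fzTerm n k
      = fzCert n (k + 1) - fzCert n k := by
  obtain ⟨d, rfl⟩ := Nat.exists_eq_add_of_le hk
  rw [fzTerm, fzTerm, fzCert, fzCert, show k + d + 2 - k = d + 1 + 1 by omega,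
    show k + d - k = d by omega, show k + d + 2 - (k + 1) = d + 1 by omega,
    b0coeff_succ (d + 1), b0coeff_succ d, b1coeff_succ k]
  push_cast
  rw [show 6 * ((k : ℚ) + d) - 6 * k + 7 = 6 * d + 7 by ring,
    show 6 * ((k : ℚ) + d) - 6 * k + 11 = 6 * d + 11 by ring,
    show 6 * ((k : ℚ) + d) - 6 * (k + 1) + 7 = 6 * d + 1 by ring,
    show 6 * ((k : ℚ) + d) - 6 * (k + 1) + 11 = 6 * d + 5 by ring, pow_succ]
  field_simp
  ring

theorem fzTerm_top (n : ℕ) :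
    ((n + 1) * (n + 2) : ℚ) * (fzTerm (n + 2) (n + 1) + fzTerm (n + 2) (n + 2))
      = -fzCert n (n + 1) := by
  rw [fzTerm, fzTerm, fzCert, show n + 2 - (n + 1) = 0 + 1 by omega, Nat.sub_self,
    b0coeff_succ, b0coeff_zero, b1coeff_succ (n + 1)]
  push_cast
  rw [show 6 * (n : ℚ) - 6 * (n + 1) + 7 = 1 by ring,
    show 6 * (n : ℚ) - 6 * (n + 1) + 11 = 5 by ring, pow_succ, pow_succ]
  field_simp
  ring

theorem sum_fzTerm_recurrence (n : ℕ) :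
    ((n + 1) * (n + 2) : ℚ) * ∑ k ∈ range (n + 3), fzTerm (n + 2) k
      = 20736 * n * (n + 2) * (3 * n + 2) * (3 * n + 4) * ∑ k ∈ range (n + 1), fzTerm n k := by
  have htel := sum_range_sub (fzCert n) (n + 1)
  rw [← sum_congr rfl fun k hk => fzTerm_telescope (Nat.lt_succ_iff.mp (mem_range.mp hk)),
    sum_sub_distrib, ← mul_sum, ← mul_sum, fzCert_zero, sub_zero] at htel
  rw [sum_range_succ, sum_range_succ, add_assoc, mul_add, fzTerm_top]
  linarith

theorem sum_fzTerm_even (m : ℕ) : ∑ k ∈ range (2 * m + 3), fzTerm (2 * m + 2) k = 0 := by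
  induction m with
  | zero => simpa using sum_fzTerm_recurrence 0
  | succ m ih =>
    have h := sum_fzTerm_recurrence (2 * m + 2)
    rw [ih, mul_zero] at h
    exact (mul_eq_zero.mp h).resolve_left (by positivity)

theorem sum_antidiagonal_b0coeff_b1coeff {n : ℕ} (hn : Even n) :
    ∑ p ∈ antidiagonal n, (-1) ^ p.2 * b0coeff p.1 * b1coeff p.2 = if n = 0 then 1 else 0 := by
  rw [← Nat.sum_antidiagonal_swap]
  simp only [Prod.fst_swap, Prod.snd_swap]
  rw [Nat.sum_antidiagonal_eq_sum_range_succ fun k i => (-1) ^ k * b0coeff i * b1coeff k]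
  obtain ⟨m, rfl⟩ := hn
  rcases m with _ | m
  · simp [b0coeff_zero, b1coeff_zero]
  · rw [if_neg (by omega), show m + 1 + (m + 1) = 2 * m + 2 by ring]
    exact sum_fzTerm_even m

theorem B0evenC_mul_B1evenC_sub_B0oddC_mul_B1oddC (c : ℚ) :
    B0evenC c * B1evenC c - B0oddC c * B1oddC c = 1 := by
  ext n
  have h : coeff n (B0evenC c * B1evenC c - B0oddC c * B1oddC c) = if Even n then
      ∑ p ∈ antidiagonal n, (-1) ^ p.2 * (b0coeff p.1 * c ^ p.1) * (b1coeff p.2 * c ^ p.2)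
      else 0 :=
    coeff_evenPart_mul_sub_oddPart_mul (fun m => b0coeff m * c ^ m) (fun m => b1coeff m * c ^ m) n
  have hsum : ∑ p ∈ antidiagonal n, (-1) ^ p.2 * (b0coeff p.1 * c ^ p.1) * (b1coeff p.2 * c ^ p.2)
      = c ^ n * ∑ p ∈ antidiagonal n, (-1) ^ p.2 * b0coeff p.1 * b1coeff p.2 := by
    rw [mul_sum]
    refine sum_congr rfl fun p hp => ?_
    rw [← mem_antidiagonal.mp hp, pow_add]
    ring
  rw [h, hsum, coeff_one]
  by_cases hn : Even n
  · rw [if_pos hn, sum_antidiagonal_b0coeff_b1coeff hn]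
    split_ifs with hn0 <;> simp [hn0]
  · rw [if_neg hn, if_neg (by rintro rfl; exact hn Even.zero)]

theorem RmatInv_is_inverse_general (c : ℚ) :
    Rmat c * RmatInv c = 1 ∧ RmatInv c * Rmat c = 1 := by
  have hdet : (RmatInv c).det = 1 := by
    rw [RmatInv, det_fin_two_of, mul_comm (B1oddC c)]
    exact B0evenC_mul_B1evenC_sub_B0oddC_mul_B1oddC c
  have hadj : Rmat c = adjugate (RmatInv c) := by
    rw [RmatInv, adjugate_fin_two_of]
    rfl
  rw [hadj, adjugate_mul, mul_adjugate, hdet, one_smul]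
  exact ⟨rfl, rfl⟩

/-- `R^{-1}(z)` is given by `[[B0^even(cz), B1^odd(cz)],[B0^odd(cz), B1^even(cz)]]`. -/
theorem RmatInv_is_inverse (c : ℚ) (hc : c ≠ 0) :
    Rmat c * RmatInv c = 1 ∧ RmatInv c * Rmat c = 1 :=
  RmatInv_is_inverse_general c
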